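/- For all k₁, k₂ ∈ ℝ, the infimum, over all positive diagonal 3×3 matrices D, of the operator norm ‖D·K·D⁻¹‖₂ equals |k₁| + √(1 + k₁² + |k₂|). -/

import Mathlib

/-- The operator norm of a `3 × 3` real matrix acting on Euclidean `ℝ³` (largest singular value). -/
noncomputable def opNorm2 (A : Matrix (Fin 3) (Fin 3) ℝ) : ℝ :=
  ‖Matrix.toEuclideanCLM (𝕜 := ℝ) A‖

/-- The boundary coupling matrix `K`. -/
def Kmat (k₁ k₂ : ℝ) : Matrix (Fin 3) (Fin 3) ℝ :=
  !![-2 * k₁, 1, -k₂; 1, 0, 0; 1, 0, 0]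

/-!
Conjugating `K` by `D = diag(d₀, d₁, d₂)` gives the matrix `M(a, b)` with rows `(-2k₁, a, -k₂ b)`,
`(a⁻¹, 0, 0)`, `(b⁻¹, 0, 0)`, where `a = d₀ / d₁` and `b = d₀ / d₂`. Up to orthogonal changes of
coordinates in the last two entries of the source and of the target, `M(a, b)` acts as
`N = [[-2k₁, s], [g, 0]]` with `s = ‖(a, -k₂ b)‖` and `g = ‖(a⁻¹, b⁻¹)‖`. Hence `‖M(a, b)‖` is at
least the spectral radius `|k₁| + √(k₁² + s g)` of `N`, and `s g ≥ 1 + |k₂|` by Cauchy–Schwarz.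
Conversely, for `D = diag(1, 1, t)` with `t² ≥ |k₂|` one has `s ≤ g`, so `‖M‖` is at most the norm
`|k₁| + √(k₁² + g²)` of the symmetric matrix `[[2|k₁|, g], [g, 0]]`, where `g² = 1 + t²`; letting
`t²` decrease to `|k₂|` shows that the lower bound is the infimum.
-/

open Matrix WithLp

section EuclideanOpNorm

variable {n : Type*} [Fintype n] [DecidableEq n]

lemma norm_toEuclideanCLM_le_of_sum_sq (A : Matrix n n ℝ) {C : ℝ} (hC : 0 ≤ C)
    (h : ∀ x : n → ℝ, ∑ i, (A *ᵥ x) i ^ 2 ≤ C ^ 2 * ∑ j, x j ^ 2) :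
    ‖toEuclideanCLM (𝕜 := ℝ) A‖ ≤ C := by
  refine ContinuousLinearMap.opNorm_le_bound _ hC fun v => ?_
  refine le_of_pow_le_pow_left₀ two_ne_zero (by positivity) ?_
  simpa only [mul_pow, EuclideanSpace.norm_sq_eq, ofLp_toEuclideanCLM, Real.norm_eq_abs, sq_abs]
    using h (ofLp v)

lemma abs_le_norm_toEuclideanCLM_of_sum_sq (A : Matrix n n ℝ) {c : ℝ} {x : n → ℝ} (hx : x ≠ 0)
    (h : c ^ 2 * ∑ j, x j ^ 2 ≤ ∑ i, (A *ᵥ x) i ^ 2) :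
    |c| ≤ ‖toEuclideanCLM (𝕜 := ℝ) A‖ := by
  have hx' : 0 < ‖toLp 2 x‖ := norm_pos_iff.2 (by simpa using hx)
  have hAx := (toEuclideanCLM (𝕜 := ℝ) A).le_opNorm (toLp 2 x)
  have hsq : c ^ 2 * ‖toLp 2 x‖ ^ 2 ≤ ‖toEuclideanCLM (𝕜 := ℝ) A‖ ^ 2 * ‖toLp 2 x‖ ^ 2 := by
    calc c ^ 2 * ‖toLp 2 x‖ ^ 2 ≤ ‖toEuclideanCLM (𝕜 := ℝ) A (toLp 2 x)‖ ^ 2 := by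
          simpa only [EuclideanSpace.norm_sq_eq, toEuclideanCLM_toLp, Real.norm_eq_abs, sq_abs]
            using h
      _ ≤ (‖toEuclideanCLM (𝕜 := ℝ) A‖ * ‖toLp 2 x‖) ^ 2 := by gcongr
      _ = _ := mul_pow _ _ _
  simpa [abs_norm] using sq_le_sq.1 (le_of_mul_le_mul_right hsq (by positivity))

end EuclideanOpNorm

lemma inv_diagonal_of_ne_zero {n : Type*} [Fintype n] [DecidableEq n] {d : n → ℝ}
    (hd : ∀ i, d i ≠ 0) : (diagonal d)⁻¹ = diagonal d⁻¹ :=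
  inv_eq_right_inv <| by
    rw [diagonal_mul_diagonal, ← diagonal_one]
    exact congrArg diagonal (funext fun i => mul_inv_cancel₀ (hd i))

noncomputable def scaledKmat (k₁ k₂ a b : ℝ) : Matrix (Fin 3) (Fin 3) ℝ :=
  !![-2 * k₁, a, -k₂ * b; a⁻¹, 0, 0; b⁻¹, 0, 0]

lemma diagonal_mul_Kmat_mul_inv (k₁ k₂ : ℝ) {d : Fin 3 → ℝ} (hd : ∀ i, d i ≠ 0) :
    diagonal d * Kmat k₁ k₂ * (diagonal d)⁻¹ = scaledKmat k₁ k₂ (d 0 / d 1) (d 0 / d 2) := by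
  rw [inv_diagonal_of_ne_zero hd]
  ext i j
  rw [mul_diagonal, diagonal_mul]
  fin_cases i <;> fin_cases j <;> simp [Kmat, scaledKmat] <;> field_simp [hd 0]

lemma sum_sq_scaledKmat_mulVec (k₁ k₂ a b : ℝ) (x : Fin 3 → ℝ) :
    ∑ i, (scaledKmat k₁ k₂ a b *ᵥ x) i ^ 2
      = (-2 * k₁ * x 0 + a * x 1 - k₂ * b * x 2) ^ 2 + (a⁻¹ ^ 2 + b⁻¹ ^ 2) * x 0 ^ 2 := by
  simp only [mulVec, dotProduct, scaledKmat, of_apply, cons_val', cons_val_fin_one,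
    Fin.sum_univ_three, cons_val_zero, cons_val_one, cons_val, zero_mul, add_zero]
  ring

lemma abs_mul_sq_add_two_mul_mul_add_abs_mul_sq_nonneg (c x y : ℝ) :
    0 ≤ |c| * x ^ 2 + 2 * c * x * y + |c| * y ^ 2 := by
  have hc := abs_nonneg c
  rcases abs_choice c with h | h <;> rw [h] at hc ⊢ <;>
    nlinarith [mul_nonneg hc (sq_nonneg (x + y)), mul_nonneg hc (sq_nonneg (x - y))]

lemma sq_add_mul_sq_le {k₁ R G z w u : ℝ} (hR0 : 0 ≤ R) (hR : R ^ 2 = k₁ ^ 2 + G) (hG : 0 < G)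
    (hz : z ^ 2 ≤ G * w) :
    (-2 * k₁ * u + z) ^ 2 + G * u ^ 2 ≤ (|k₁| + R) ^ 2 * (u ^ 2 + w) := by
  set k := |k₁|
  have hk : k ^ 2 = k₁ ^ 2 := sq_abs k₁
  have key : G * ((k + R) ^ 2 * (u ^ 2 + w) - ((-2 * k₁ * u + z) ^ 2 + G * u ^ 2))
      = 2 * (k + R) * (k * ((R - k) * u) ^ 2 + 2 * k₁ * ((R - k) * u) * z + k * z ^ 2)
        + (k + R) ^ 2 * (G * w - z ^ 2) := by
    let C := 4 * k₁ * u * z - z ^ 2 + (2 * k * (R - k) - G) * u ^ 2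
    linear_combination (-C) * hR + (C + 4 * G * u ^ 2) * hk
  have hquad := abs_mul_sq_add_two_mul_mul_add_abs_mul_sq_nonneg k₁ ((R - k) * u) z
  have hprod : 0 ≤ G * ((k + R) ^ 2 * (u ^ 2 + w) - ((-2 * k₁ * u + z) ^ 2 + G * u ^ 2)) := by
    rw [key]
    exact add_nonneg (mul_nonneg (by positivity) hquad) (mul_nonneg (sq_nonneg _) (sub_nonneg.2 hz))
  exact sub_nonneg.1 ((mul_nonneg_iff_of_pos_left hG).1 hprod)

lemma opNorm2_scaledKmat_le (k₁ k₂ : ℝ) {a b : ℝ} (ha : a ≠ 0)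
    (h : a ^ 2 + k₂ ^ 2 * b ^ 2 ≤ a⁻¹ ^ 2 + b⁻¹ ^ 2) :
    opNorm2 (scaledKmat k₁ k₂ a b) ≤ |k₁| + √(k₁ ^ 2 + (a⁻¹ ^ 2 + b⁻¹ ^ 2)) := by
  set G := a⁻¹ ^ 2 + b⁻¹ ^ 2
  have hG : 0 < G := by positivity
  refine norm_toEuclideanCLM_le_of_sum_sq _ (by positivity) fun x => ?_
  have hz : (a * x 1 - k₂ * b * x 2) ^ 2 ≤ G * (x 1 ^ 2 + x 2 ^ 2) :=
    calc (a * x 1 - k₂ * b * x 2) ^ 2 ≤ (a ^ 2 + k₂ ^ 2 * b ^ 2) * (x 1 ^ 2 + x 2 ^ 2) := by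
          nlinarith [sq_nonneg (a * x 2 + k₂ * b * x 1)]
      _ ≤ G * (x 1 ^ 2 + x 2 ^ 2) := by gcongr
  rw [sum_sq_scaledKmat_mulVec, Fin.sum_univ_three]
  linear_combination sq_add_mul_sq_le (k₁ := k₁) (u := x 0) (Real.sqrt_nonneg _)
    (Real.sq_sqrt (by positivity)) hG hz

lemma abs_le_opNorm2_scaledKmat (k₁ k₂ : ℝ) {a b s g l : ℝ} (ha : a ≠ 0)
    (hs : s ^ 2 = a ^ 2 + k₂ ^ 2 * b ^ 2) (hg : g ^ 2 = a⁻¹ ^ 2 + b⁻¹ ^ 2)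
    (hl : l ^ 2 + 2 * k₁ * l = s * g) :
    |l| ≤ opNorm2 (scaledKmat k₁ k₂ a b) := by
  have hg0 : g ≠ 0 := by
    rintro rfl
    have : 0 < a⁻¹ ^ 2 + b⁻¹ ^ 2 := by positivity
    linarith
  -- `s` times the lift of the eigenvector `(l, g)` of `N = [[-2k₁, s], [g, 0]]`
  refine abs_le_norm_toEuclideanCLM_of_sum_sq _ (x := ![l * s, g * a, -(g * k₂ * b)])
    (fun h => mul_ne_zero hg0 ha (by simpa using congrFun h 1)) (le_of_eq ?_)
  rw [sum_sq_scaledKmat_mulVec, Fin.sum_univ_three]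
  simp only [Matrix.cons_val_zero, Matrix.cons_val_one, Matrix.cons_val_two, Matrix.head_cons,
    Matrix.tail_cons]
  let Y₀ := s * (g * s - 2 * k₁ * l)
  let Δ := a ^ 2 + k₂ ^ 2 * b ^ 2 - s ^ 2
  linear_combination s * (Y₀ + s * l ^ 2) * hl + (2 * Y₀ * g + g ^ 2 * Δ - l ^ 2 * g ^ 2) * hs
    + l ^ 2 * s ^ 2 * hg

lemma le_opNorm2_scaledKmat (k₁ k₂ : ℝ) {a b : ℝ} (ha : a ≠ 0) (hb : b ≠ 0) :
    |k₁| + √(1 + k₁ ^ 2 + |k₂|) ≤ opNorm2 (scaledKmat k₁ k₂ a b) := by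
  set s := √(a ^ 2 + k₂ ^ 2 * b ^ 2)
  set g := √(a⁻¹ ^ 2 + b⁻¹ ^ 2)
  have hs : s ^ 2 = a ^ 2 + k₂ ^ 2 * b ^ 2 := Real.sq_sqrt (by positivity)
  have hg : g ^ 2 = a⁻¹ ^ 2 + b⁻¹ ^ 2 := Real.sq_sqrt (by positivity)
  have hsg : 1 + |k₂| ≤ s * g := by
    rw [← Real.sqrt_mul (by positivity)]
    refine Real.le_sqrt_of_sq_le ?_
    -- Cauchy–Schwarz for `(a, |k₂| b)` and `(a⁻¹, b⁻¹)`
    field_simp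
    rw [le_div_iff₀ (by positivity)]
    linear_combination sq_nonneg (a ^ 2 - |k₂| * b ^ 2) + (b ^ 4 + a ^ 2 * b ^ 2) * sq_abs k₂
  set r := √(k₁ ^ 2 + s * g)
  have hr : r ^ 2 = k₁ ^ 2 + s * g := Real.sq_sqrt (by positivity)
  have hroot (l : ℝ) (hl : (l + k₁) ^ 2 = r ^ 2) : |l| ≤ opNorm2 (scaledKmat k₁ k₂ a b) :=
    abs_le_opNorm2_scaledKmat k₁ k₂ ha hs hg (by linear_combination hl + hr)
  have hr_ge : √(1 + k₁ ^ 2 + |k₂|) ≤ r := Real.sqrt_le_sqrt (by linarith)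
  rcases le_total k₁ 0 with h | h
  · calc |k₁| + √(1 + k₁ ^ 2 + |k₂|) ≤ -k₁ + r := by rw [abs_of_nonpos h]; linarith
      _ ≤ |-k₁ + r| := le_abs_self _
      _ ≤ _ := hroot _ (by ring)
  · calc |k₁| + √(1 + k₁ ^ 2 + |k₂|) ≤ -(-k₁ - r) := by rw [abs_of_nonneg h]; linarith
      _ ≤ |-k₁ - r| := neg_le_abs _
      _ ≤ _ := hroot _ (by ring)

lemma opNorm2_scaledKmat_one_inv_le (k₁ k₂ : ℝ) {t : ℝ} (ht : 0 < t) (h : |k₂| ≤ t ^ 2) :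
    opNorm2 (scaledKmat k₁ k₂ 1 t⁻¹) ≤ |k₁| + √(1 + k₁ ^ 2 + t ^ 2) := by
  have hk₂ : k₂ ^ 2 * (t⁻¹) ^ 2 ≤ t ^ 2 := by
    rw [← sq_abs, inv_pow, ← div_eq_mul_inv, div_le_iff₀ (by positivity)]
    nlinarith [abs_nonneg k₂]
  convert opNorm2_scaledKmat_le k₁ k₂ one_ne_zero (b := t⁻¹) (by simpa using hk₂) using 3
  simp only [inv_one, one_pow, inv_inv]
  ring

lemma exists_pos_le_sq_and_sqrt_add_sq_lt {A x v : ℝ} (hx : 0 ≤ x) (h : √(A + x) < v) :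
    ∃ t > 0, x ≤ t ^ 2 ∧ √(A + t ^ 2) < v := by
  have hv : 0 < v := (Real.sqrt_nonneg _).trans_lt h
  have hAx : A + x < v ^ 2 := (Real.sqrt_lt' hv).1 h
  set δ := (v ^ 2 - (A + x)) / 2
  have hδ : 0 < δ := by simp only [δ]; linarith
  have ht : √(x + δ) ^ 2 = x + δ := Real.sq_sqrt (by positivity)
  refine ⟨√(x + δ), Real.sqrt_pos.2 (by positivity), by linarith, ?_⟩
  rw [ht, Real.sqrt_lt' hv]
  simp only [δ]
  linarith

theorem stmt_5 (k₁ k₂ : ℝ) :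
    sInf {x : ℝ | ∃ D : Matrix (Fin 3) (Fin 3) ℝ, D.IsDiag ∧ (∀ i, 0 < D i i) ∧
        x = opNorm2 (D * Kmat k₁ k₂ * D⁻¹)} =
      |k₁| + Real.sqrt (1 + k₁ ^ 2 + |k₂|) := by
  refine csInf_eq_of_forall_ge_of_forall_gt_exists_lt ⟨_, 1, isDiag_one, by simp, rfl⟩ ?_ ?_
  · rintro _ ⟨D, hD, hpos, rfl⟩
    have hd (i : Fin 3) : D.diag i ≠ 0 := (hpos i).ne'
    rw [← hD.diagonal_diag, diagonal_mul_Kmat_mul_inv k₁ k₂ hd]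
    exact le_opNorm2_scaledKmat k₁ k₂ (div_ne_zero (hd 0) (hd 1)) (div_ne_zero (hd 0) (hd 2))
  · intro w hw
    obtain ⟨t, ht, hk₂t, htw⟩ := exists_pos_le_sq_and_sqrt_add_sq_lt (abs_nonneg k₂)
      (show √(1 + k₁ ^ 2 + |k₂|) < w - |k₁| by linarith)
    have hd (i : Fin 3) : ![1, 1, t] i ≠ 0 := by fin_cases i <;> simp [ht.ne']
    refine ⟨_, ⟨diagonal ![1, 1, t], isDiag_diagonal _, fun i => ?_, rfl⟩, ?_⟩
    · fin_cases i <;> simp [ht]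
    · rw [diagonal_mul_Kmat_mul_inv k₁ k₂ hd]
      simpa using (opNorm2_scaledKmat_one_inv_le k₁ k₂ ht hk₂t).trans_lt (lt_sub_iff_add_lt'.1 htw)
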